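/- Let c and e be real numbers with c ≠ 1 and e > 0, and let 0 < z < 1/2. Then Σ_{k=0}^∞ (c)_k/((k+1)·(e)_k)·(z/(z−1))^k = ((z−1)(e−c)/(c−1))·Σ_{k=0}^∞ (e−c+1)_k z^k/((k+1)·(e)_k) + ((e−1)(1−z)/((c−1)z))·ln(1/(1−z)). (This is the relation ₃F₂(1,1,c; 2,e; z/(z−1)) = ((z−1)(e−c)/(c−1))·₃F₂(1,1,e−c+1; 2,e; z) + ((e−1)(1−z)/((c−1)z))·ln(1/(1−z)).) -/

import Mathlib

open Real

/-- Rising factorial (Pochhammer symbol) `(a)_k`. -/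
noncomputable def poch (a : ℝ) (k : ℕ) : ℝ := (ascPochhammer ℝ k).eval a

/-!
Expanding `(z / (z - 1)) ^ k = (1 - z) (-z) ^ k (1 - z) ^ (-(k + 1))` by the negative binomial
series and summing the double series along `k + j = n` gives Euler's transformation
`∑ a_k (z / (z - 1)) ^ k = (1 - z) ∑ z ^ n ∑_{k ≤ n} (-1) ^ k C(n, k) a_k`; it converges absolutely
as soon as `∑ |a_k| (z / (1 - z)) ^ k` does, which for the `₃F₂` coefficients means `z < 1 / 2`.

For `a_k = (c)_k / ((k + 1) (e)_k)` the inner sum is explicit. Since `C(n, k) / (k + 1)` equals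
`C(n + 1, k + 1) / (n + 1)`, the hockey-stick identity turns it into `(n + 1)⁻¹ ∑_{j ≤ n} ₂F₁(-j, c; e; 1)`,
each `₂F₁(-j, c; e; 1) = (e - c)_j / (e)_j` by Chu–Vandermonde, and these telescope to
`((e - 1) - (e - c)_{n + 1} / (e)_n) / (c - 1)`. The two resulting power series in `z` are
`₃F₂(1, 1, e - c + 1; 2, e; z)` and `∑ z ^ n / (n + 1) = log (1 / (1 - z)) / z`.
-/

open Finset Filter

lemma poch_zero (a : ℝ) : poch a 0 = 1 := by simp [poch]

lemma poch_succ (a : ℝ) (k : ℕ) : poch a (k + 1) = poch a k * (a + k) :=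
  ascPochhammer_succ_eval k a

lemma poch_succ_left (a : ℝ) (k : ℕ) : poch a (k + 1) = a * poch (a + 1) k := by
  simp [poch, ascPochhammer_succ_left, Polynomial.eval_comp]

lemma poch_pos {a : ℝ} (ha : 0 < a) (k : ℕ) : 0 < poch a k := ascPochhammer_pos k a ha

lemma sum_alternating_choose_eq_fwdDiff_iter (f : ℕ → ℝ) (n : ℕ) :
    ∑ k ∈ range (n + 1), (-1) ^ k * n.choose k * f k = (-1) ^ n * (fwdDiff 1)^[n] f 0 := by
  rw [fwdDiff_iter_eq_sum_shift, mul_sum]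
  refine sum_congr rfl fun k hk => ?_
  obtain ⟨d, rfl⟩ := Nat.exists_eq_add_of_le (Nat.lt_succ_iff.mp (mem_range.mp hk))
  simp only [zsmul_eq_mul, zero_add, nsmul_eq_mul, mul_one, Nat.add_sub_cancel_left]
  push_cast
  have hd : ((-1 : ℝ) ^ d) ^ 2 = 1 := by rw [← pow_mul, mul_comm, pow_mul, neg_one_sq, one_pow]
  rw [pow_add]
  linear_combination (-(-1 : ℝ) ^ k * (k + d).choose k * f k) * hd

lemma fwdDiff_poch_div_poch (c : ℝ) {e : ℝ} (he : 0 < e) :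
    fwdDiff 1 (fun k : ℕ => poch c k / poch e k) =
      ((c - e) / e) • fun k : ℕ => poch c k / poch (e + 1) k := by
  funext k
  have hshift : e * poch (e + 1) k = poch e k * (e + k) := by rw [← poch_succ_left, poch_succ]
  have hek : 0 < e + k := by positivity
  have := (poch_pos he k).ne'
  have := (poch_pos (by linarith : 0 < e + 1) k).ne'
  simp only [fwdDiff, Pi.smul_apply, smul_eq_mul, poch_succ]
  field_simp
  linear_combination (poch c k * (c - e)) * hshift

lemma fwdDiff_iter_poch_div_poch (c : ℝ) {e : ℝ} (he : 0 < e) (n : ℕ) :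
    (fwdDiff 1)^[n] (fun k : ℕ => poch c k / poch e k) 0 = (-1) ^ n * poch (e - c) n / poch e n := by
  induction n generalizing e with
  | zero => simp [poch_zero]
  | succ n ih =>
    rw [Function.iterate_succ_apply, fwdDiff_poch_div_poch c he, fwdDiff_iter_const_smul,
      Pi.smul_apply, smul_eq_mul, ih (by linarith), poch_succ_left (e - c), poch_succ_left e,
      show e + 1 - c = e - c + 1 by ring]
    have := (poch_pos (by linarith : 0 < e + 1) n).ne'
    field_simp
    ring

lemma sum_alternating_choose_poch_div_poch (c : ℝ) {e : ℝ} (he : 0 < e) (n : ℕ) :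
    ∑ k ∈ range (n + 1), (-1) ^ k * n.choose k * (poch c k / poch e k) =
      poch (e - c) n / poch e n := by
  rw [sum_alternating_choose_eq_fwdDiff_iter, fwdDiff_iter_poch_div_poch c he, mul_div_assoc,
    ← mul_assoc, ← mul_pow]
  norm_num

lemma succ_mul_sum_alternating_choose_div_succ (t : ℕ → ℝ) (m : ℕ) :
    (m + 1) * ∑ k ∈ range (m + 1), (-1) ^ k * m.choose k * (t k / (k + 1)) =
      ∑ j ∈ range (m + 1), ∑ k ∈ range (j + 1), (-1) ^ k * j.choose k * t k := by
  rw [sum_comm' (t' := range (m + 1)) (s' := fun k => Icc k m) (by intro j k; simp; omega),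
    mul_sum]
  refine sum_congr rfl fun k _ => ?_
  have hchoose : ((m : ℝ) + 1) * m.choose k = (m + 1).choose (k + 1) * (k + 1) := by
    exact_mod_cast Nat.add_one_mul_choose_eq m k
  have hockey : ∑ j ∈ Icc k m, (j.choose k : ℝ) = (m + 1).choose (k + 1) := by
    exact_mod_cast Nat.sum_Icc_choose m k
  rw [← sum_mul, ← mul_sum, hockey]
  field_simp
  linear_combination t k * hchoose

lemma sub_one_mul_sum_poch_div_poch (c : ℝ) {e : ℝ} (he : 0 < e) (n : ℕ) :
    (c - 1) * ∑ j ∈ range (n + 1), poch (e - c) j / poch e j =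
      e - 1 - poch (e - c) (n + 1) / poch e n := by
  induction n with
  | zero => simp [poch_zero, poch_succ]
  | succ n ih =>
    rw [sum_range_succ, mul_add, ih, poch_succ (e - c) (n + 1), poch_succ e n]
    have := (poch_pos he n).ne'
    have : 0 < e + n := by positivity
    field_simp
    push_cast
    ring

/-- The coefficient of `w ^ k` in `₃F₂(1, 1, c; 2, e; w)`. -/
noncomputable def threeF2Coeff (c e : ℝ) (k : ℕ) : ℝ := poch c k / ((k + 1) * poch e k)

lemma sub_one_mul_sum_alternating_choose_threeF2Coeff (c : ℝ) {e : ℝ} (he : 0 < e) (n : ℕ) :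
    (c - 1) * ∑ k ∈ range (n + 1), (-1) ^ k * n.choose k * threeF2Coeff c e k =
      (e - 1) / (n + 1) - (e - c) * threeF2Coeff (e - c + 1) e n := by
  have hcoeff (k : ℕ) : threeF2Coeff c e k = poch c k / poch e k / (k + 1) := by
    rw [threeF2Coeff, div_div, mul_comm]
  have h : (c - 1) * ((n + 1) * ∑ k ∈ range (n + 1), (-1) ^ k * n.choose k * threeF2Coeff c e k) =
      e - 1 - poch (e - c) (n + 1) / poch e n := by
    simp only [hcoeff, succ_mul_sum_alternating_choose_div_succ,
      sum_alternating_choose_poch_div_poch c he, sub_one_mul_sum_poch_div_poch c he]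
  rw [poch_succ_left] at h
  have := (poch_pos he n).ne'
  rw [threeF2Coeff]
  field_simp at h ⊢
  linear_combination h

lemma summable_abs_threeF2Coeff_mul_pow (c : ℝ) {e v : ℝ} (he : 0 < e) (hv0 : 0 ≤ v)
    (hv1 : v < 1) : Summable fun k => |threeF2Coeff c e k| * v ^ k := by
  refine summable_of_ratio_norm_eventually_le (r := (1 + v) / 2) (by linarith) ?_
  filter_upwards [eventually_ge_atTop ⌈2 * |c| / (1 - v)⌉₊] with k hk
  have hk' : 2 * |c| ≤ (1 - v) * k := by
    rw [← div_le_iff₀' (by linarith)]; exact Nat.ceil_le.mp hk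
  have hpe := poch_pos he k
  have hek : 0 < e + k := by positivity
  have hratio : v * |c + k| ≤ (1 + v) / 2 * (e + k) := by
    have : |c + k| ≤ |c| + k := by simpa using abs_add_le c k
    nlinarith [mul_le_mul_of_nonneg_left this hv0,
      mul_nonneg (by linarith : 0 ≤ 1 - v) (abs_nonneg c)]
  have hk1 : (0 : ℝ) < k + 1 := by positivity
  have hstep : |threeF2Coeff c e (k + 1)| * v ^ (k + 1) =
      |threeF2Coeff c e k| * v ^ k * (v * |c + k| / (e + k) * ((k + 1) / (k + 2))) := by
    simp only [threeF2Coeff, poch_succ, abs_div, abs_mul, abs_of_pos hpe, abs_of_pos hek,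
      abs_of_pos hk1, Nat.cast_succ, abs_of_pos (by positivity : (0 : ℝ) < k + 1 + 1)]
    field_simp
    ring
  have hfactor : v * |c + k| / (e + k) * ((k + 1) / (k + 2)) ≤ (1 + v) / 2 :=
    calc _ ≤ v * |c + k| / (e + k) * 1 := by gcongr; rw [div_le_one₀ (by linarith)]; linarith
      _ ≤ (1 + v) / 2 := by rw [mul_one, div_le_iff₀ hek]; exact hratio
  rw [norm_of_nonneg (by positivity), norm_of_nonneg (by positivity), hstep, mul_comm _ (_ * _)]
  gcongr

theorem HasSum.sum_antidiagonal {α A : Type*} [AddCommMonoid α] [TopologicalSpace α]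
    [ContinuousAdd α] [RegularSpace α] [AddCommMonoid A] [HasAntidiagonal A] {f : A × A → α}
    {a : α} (hf : HasSum f a) : HasSum (fun n => ∑ p ∈ antidiagonal n, f p) a :=
  (HasAntidiagonal.sigmaAntidiagonalEquivProd.hasSum_iff.2 hf).sigma fun n =>
    (antidiagonal n).hasSum f

theorem tsum_euler_transformation {a : ℕ → ℝ} {z : ℝ} (hz : |z| < 1)
    (ha : Summable fun k => |a k| * (|z| / (1 - |z|)) ^ k) :
    ∑' k, a k * (z / (z - 1)) ^ k =
      (1 - z) * ∑' n, z ^ n * ∑ k ∈ range (n + 1), (-1) ^ k * n.choose k * a k := by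
  have h1z : 0 < 1 - z := by linarith [le_abs_self z]
  have h1az : 0 < 1 - |z| := by linarith
  set g : ℕ × ℕ → ℝ := fun p => a p.1 * (-z) ^ p.1 * ((p.2 + p.1).choose p.1 * z ^ p.2)
  have hfiber (k : ℕ) : HasSum (fun j => g (k, j)) (a k * (-z) ^ k * (1 / (1 - z) ^ (k + 1))) :=
    (hasSum_choose_mul_geometric_of_norm_lt_one k (r := z) (by rwa [Real.norm_eq_abs])).mul_left
      (a k * (-z) ^ k)
  have hfiber_abs (k : ℕ) :
      HasSum (fun j => |g (k, j)|) (|a k| * |z| ^ k * (1 / (1 - |z|) ^ (k + 1))) := by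
    refine ((hasSum_choose_mul_geometric_of_norm_lt_one k (r := |z|) (by simpa)).mul_left
      (|a k| * |z| ^ k)).congr_fun fun j => ?_
    simp [g, abs_mul, abs_pow]
  have hg : Summable g := by
    refine Summable.of_abs ((summable_prod_of_nonneg fun _ => abs_nonneg _).2
      ⟨fun k => (hfiber_abs k).summable, ?_⟩)
    simp_rw [(hfiber_abs _).tsum_eq]
    refine (ha.mul_left (1 - |z|)⁻¹).congr fun k => ?_
    rw [div_pow, pow_succ]
    field_simp
  have hrow : HasSum (fun k => a k * (z / (z - 1)) ^ k) ((1 - z) * ∑' p, g p) := by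
    refine ((hg.hasSum.prod_fiberwise hfiber).mul_left (1 - z)).congr_fun fun k => ?_
    rw [show z / (z - 1) = -z / (1 - z) by rw [← neg_div_neg_eq, neg_sub], div_pow, pow_succ]
    field_simp
  have hdiag (n : ℕ) : ∑ p ∈ antidiagonal n, g p =
      z ^ n * ∑ k ∈ range (n + 1), (-1) ^ k * n.choose k * a k := by
    rw [Nat.sum_antidiagonal_eq_sum_range_succ_mk, mul_sum]
    refine sum_congr rfl fun k hk => ?_
    obtain ⟨d, rfl⟩ := Nat.exists_eq_add_of_le (Nat.lt_succ_iff.mp (mem_range.mp hk))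
    rw [Nat.add_sub_cancel_left, add_comm k d, neg_pow]
    ring
  rw [hrow.tsum_eq, ← (hg.hasSum.sum_antidiagonal.congr_fun fun n => (hdiag n).symm).tsum_eq]

lemma summable_threeF2Coeff_mul_pow (c : ℝ) {e z : ℝ} (he : 0 < e) (hz : |z| < 1) :
    Summable fun k => threeF2Coeff c e k * z ^ k :=
  .of_abs <| (summable_abs_threeF2Coeff_mul_pow c he (abs_nonneg z) hz).congr fun k => by
    rw [abs_mul, abs_pow]

lemma hasSum_pow_div_succ {z : ℝ} (hz : |z| < 1) (hz0 : z ≠ 0) :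
    HasSum (fun n : ℕ => z ^ n / (n + 1)) (log (1 / (1 - z)) / z) := by
  rw [one_div, log_inv]
  refine ((hasSum_pow_div_log_of_abs_lt_one hz).div_const z).congr_fun fun n => ?_
  field_simp
  ring

/-- the transformation of `₃F₂(1,1,c;2,e;z/(z-1))`. -/
theorem threeF2_log_transformation (c e z : ℝ) (hc : c ≠ 1) (he : 0 < e)
    (hz0 : 0 < z) (hz : z < 1/2) :
    ∑' k : ℕ, poch c k / ((k + 1 : ℝ) * poch e k) * (z / (z - 1)) ^ k =
      ((z - 1) * (e - c) / (c - 1)) *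
        ∑' k : ℕ, poch (e - c + 1) k * z ^ k / ((k + 1 : ℝ) * poch e k) +
      ((e - 1) * (1 - z) / ((c - 1) * z)) * Real.log (1 / (1 - z)) := by
  have habs : |z| = z := abs_of_pos hz0
  have hc1 : c - 1 ≠ 0 := sub_ne_zero.mpr hc
  have hz1 : |z| < 1 := by linarith
  have hB : ∑' k : ℕ, poch (e - c + 1) k * z ^ k / ((k + 1 : ℝ) * poch e k) =
      ∑' k, threeF2Coeff (e - c + 1) e k * z ^ k :=
    tsum_congr fun k => mul_div_right_comm _ _ _
  have hdiff (n : ℕ) : z ^ n * ∑ k ∈ range (n + 1), (-1) ^ k * n.choose k * threeF2Coeff c e k =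
      (e - 1) / (c - 1) * (z ^ n / (n + 1)) -
        (e - c) / (c - 1) * (threeF2Coeff (e - c + 1) e n * z ^ n) := by
    rw [div_mul_eq_mul_div, div_mul_eq_mul_div, ← sub_div, eq_div_iff hc1]
    linear_combination z ^ n * sub_one_mul_sum_alternating_choose_threeF2Coeff c he n
  have hsum :
      HasSum (fun n => z ^ n * ∑ k ∈ range (n + 1), (-1) ^ k * n.choose k * threeF2Coeff c e k)
        ((e - 1) / (c - 1) * (log (1 / (1 - z)) / z) -
          (e - c) / (c - 1) * ∑' k, threeF2Coeff (e - c + 1) e k * z ^ k) :=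
    (((hasSum_pow_div_succ hz1 hz0.ne').mul_left _).sub
      ((summable_threeF2Coeff_mul_pow _ he hz1).hasSum.mul_left _)).congr_fun hdiff
  have hratio : |z| / (1 - |z|) < 1 := by rw [habs, div_lt_one (by linarith)]; linarith
  change ∑' k : ℕ, threeF2Coeff c e k * (z / (z - 1)) ^ k = _
  rw [hB, tsum_euler_transformation hz1
    (summable_abs_threeF2Coeff_mul_pow c he (by positivity) hratio), hsum.tsum_eq]
  field_simp
  ring
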